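/- arXiv:2509.05239 — 3 statements merged into one kernel-verified Lean document; each statement's English description precedes it below -/
import Mathlib

section
/- Let ε > 0 and suppose ω ⊆ 𝕋² = ℝ²/ℤ² contains an open ball of radius ε. Then there are at most 1/ε² directions v ∈ 𝕊¹ such that some geodesic line L_{z,v} = {z + tv : t ∈ ℝ} in 𝕋² is disjoint from ω. -/
/-!
A geodesic of direction `v` missing the ball of radius `ε` about `c` lifts to a line in `ℝ²`
at distance at least `ε` from every point of `c + ℤ²`. If `d` is the signed distance from `c`
to the lifted line, translating by `(b, -a) ∈ ℤ²` changes it to `d + a v₁ + b v₂`, so the coset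
`d + ℤ v₁ + ℤ v₂` avoids `(-ε, ε)`. Hence the group `ℤ v₁ + ℤ v₂` is not dense in `ℝ`, so it is
cyclic, generated by some `α ≥ 2ε`, and `v = α (p, q)` with `(p, q)` primitive and
`p² + q² = α⁻² ≤ 1 / (4ε²)`. Finally, there are at most `4R` primitive vectors with
`p² + q² ≤ R`: four on the axes and at most `4 (R - 1)` with both coordinates nonzero.
-/

noncomputable section

/-- The flat torus `ℝ²/ℤ²`. -/
abbrev T2 : Type := AddCircle (1:ℝ) × AddCircle (1:ℝ)

/-- Natural projection `ℝ² → 𝕋²`. -/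
def torusProj (p : ℝ × ℝ) : T2 := ((p.1 : AddCircle (1:ℝ)), (p.2 : AddCircle (1:ℝ)))

/-- The geodesic line through `z` with direction `v`: the image of `t ↦ z + t v` in `𝕋²`. -/
def torusLine (z : T2) (v : ℝ × ℝ) : Set T2 := {w | ∃ t : ℝ, w = z + torusProj (t • v)}

open AddSubgroup

lemma torusProj_add (p q : ℝ × ℝ) : torusProj (p + q) = torusProj p + torusProj q := rfl

lemma torusProj_add_intCast (p : ℝ × ℝ) (a b : ℤ) :
    torusProj (p + ((a : ℝ), (b : ℝ))) = torusProj p := by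
  simp [torusProj]

lemma torusProj_surjective : Function.Surjective torusProj :=
  QuotientAddGroup.mk_surjective.prodMap QuotientAddGroup.mk_surjective

/-- The foot of the perpendicular from `c` to the line `u + ℝ v` realises the distance
`|(u - c) × v|`. -/
lemma exists_sqrt_eq_abs_cross (u c : ℝ × ℝ) {v : ℝ × ℝ} (hv : v.1 ^ 2 + v.2 ^ 2 = 1) :
    ∃ t : ℝ, √(((u + t • v).1 - c.1) ^ 2 + ((u + t • v).2 - c.2) ^ 2) =
      |(u.1 - c.1) * v.2 - (u.2 - c.2) * v.1| := by
  refine ⟨-((u.1 - c.1) * v.1 + (u.2 - c.2) * v.2), ?_⟩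
  rw [← Real.sqrt_sq_eq_abs]
  congr 1
  simp only [Prod.fst_add, Prod.snd_add, Prod.smul_fst, Prod.smul_snd, smul_eq_mul]
  linear_combination (((u.1 - c.1) * v.1 + (u.2 - c.2) * v.2) ^ 2
    - (u.1 - c.1) ^ 2 - (u.2 - c.2) ^ 2) * hv

lemma exists_forall_le_abs_of_torusLine_inter_eq_empty {ε : ℝ} {ω : Set T2} {c : ℝ × ℝ}
    (hc : ∀ p : ℝ × ℝ, √((p.1 - c.1) ^ 2 + (p.2 - c.2) ^ 2) < ε → torusProj p ∈ ω)
    {v : ℝ × ℝ} (hv : v.1 ^ 2 + v.2 ^ 2 = 1) {z : T2} (hz : torusLine z v ∩ ω = ∅) :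
    ∃ d : ℝ, ∀ a b : ℤ, ε ≤ |d + a * v.1 + b * v.2| := by
  obtain ⟨w, rfl⟩ := torusProj_surjective z
  refine ⟨(w.1 - c.1) * v.2 - (w.2 - c.2) * v.1, fun a b => ?_⟩
  set u := w + ((b : ℝ), ((-a : ℤ) : ℝ))
  obtain ⟨t, ht⟩ := exists_sqrt_eq_abs_cross u c hv
  have hcross : (u.1 - c.1) * v.2 - (u.2 - c.2) * v.1 =
      (w.1 - c.1) * v.2 - (w.2 - c.2) * v.1 + a * v.1 + b * v.2 := by
    simp only [u, Prod.fst_add, Prod.snd_add, Int.cast_neg]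
    ring
  rw [hcross] at ht
  by_contra! hlt
  rw [← ht] at hlt
  refine (Set.eq_empty_iff_forall_notMem.mp hz) _ ⟨⟨t, ?_⟩, hc _ hlt⟩
  rw [torusProj_add, torusProj_add_intCast]

/-- The bound `2ε ≤ α` holds because every coset of `α ℤ` meets `[-α/2, α/2]`. -/
lemma AddSubgroup.exists_eq_zmultiples_of_forall_le_abs_add {H : AddSubgroup ℝ} (hH : H ≠ ⊥)
    {ε d : ℝ} (hε : 0 < ε) (h : ∀ x ∈ H, ε ≤ |d + x|) :
    ∃ α, 2 * ε ≤ α ∧ H = zmultiples α := by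
  obtain hdense | ⟨a, rfl⟩ := H.dense_or_cyclic
  · obtain ⟨x, hx, hxH⟩ := Metric.dense_iff.mp hdense (-d) ε hε
    rw [Metric.mem_ball, Real.dist_eq, sub_neg_eq_add, add_comm] at hx
    linarith [h x hxH]
  rw [← zmultiples_eq_closure] at hH h ⊢
  have ha : a ≠ 0 := by
    rintro rfl
    exact hH zmultiples_zero_eq_bot
  refine ⟨|a|, ?_, ?_⟩
  · have hk := h (-round (d / a) • a) (zsmul_mem (mem_zmultiples a) _)
    have hdist : d + -round (d / a) • a = a * (d / a - round (d / a)) := by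
      rw [zsmul_eq_mul, Int.cast_neg]
      field_simp
      ring
    rw [hdist, abs_mul] at hk
    nlinarith [abs_sub_round (d / a), abs_nonneg a]
  · rcases abs_choice a with h | h <;> rw [h]
    exact zmultiples_neg.symm

lemma exists_isCoprime_of_closure_pair_eq_zmultiples {K : Type*} [Field K] [CharZero K]
    {x y α : K} (hα : α ≠ 0) (h : AddSubgroup.closure {x, y} = zmultiples α) :
    ∃ p q : ℤ, IsCoprime p q ∧ x = p * α ∧ y = q * α := by
  obtain ⟨p, hp⟩ : x ∈ zmultiples α := h ▸ subset_closure (by simp)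
  obtain ⟨q, hq⟩ : y ∈ zmultiples α := h ▸ subset_closure (by simp)
  obtain ⟨a, b, hab⟩ := mem_closure_pair.mp (h ▸ mem_zmultiples α)
  simp only [zsmul_eq_mul] at hp hq
  refine ⟨p, q, ⟨a, b, ?_⟩, hp.symm, hq.symm⟩
  have : ((a * p + b * q : ℤ) : K) * α = 1 * α := by
    rw [← hp, ← hq, zsmul_eq_mul, zsmul_eq_mul] at hab
    push_cast
    linear_combination hab
  exact_mod_cast mul_right_cancel₀ hα this

def primitiveVectors (R : ℝ) : Set (ℤ × ℤ) :=
  {x | IsCoprime x.1 x.2 ∧ (x.1 : ℝ) ^ 2 + (x.2 : ℝ) ^ 2 ≤ R}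

def intDirection (x : ℤ × ℤ) : ℝ × ℝ :=
  ((x.1 : ℝ) / √((x.1 : ℝ) ^ 2 + (x.2 : ℝ) ^ 2), (x.2 : ℝ) / √((x.1 : ℝ) ^ 2 + (x.2 : ℝ) ^ 2))

lemma mem_image_intDirection_of_forall_le_abs {ε d : ℝ} (hε : 0 < ε) {v : ℝ × ℝ}
    (hv : v.1 ^ 2 + v.2 ^ 2 = 1) (h : ∀ a b : ℤ, ε ≤ |d + a * v.1 + b * v.2|) :
    v ∈ intDirection '' primitiveVectors (1 / (4 * ε ^ 2)) := by
  have hH : AddSubgroup.closure {v.1, v.2} ≠ ⊥ := by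
    intro hbot
    have h1 : v.1 = 0 := mem_bot.mp (hbot ▸ subset_closure (by simp))
    have h2 : v.2 = 0 := mem_bot.mp (hbot ▸ subset_closure (by simp))
    simp [h1, h2] at hv
  obtain ⟨α, hεα, hα⟩ := exists_eq_zmultiples_of_forall_le_abs_add hH hε (d := d) (by
    intro x hx
    obtain ⟨a, b, rfl⟩ := mem_closure_pair.mp hx
    simpa only [zsmul_eq_mul, add_assoc] using h a b)
  have hαpos : 0 < α := by linarith
  obtain ⟨p, q, hpq, hp, hq⟩ := exists_isCoprime_of_closure_pair_eq_zmultiples hαpos.ne' hα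
  have hnorm : (p : ℝ) ^ 2 + (q : ℝ) ^ 2 = (α⁻¹) ^ 2 := by
    rw [hp, hq] at hv
    field_simp
    linear_combination hv
  have hsqrt : √((p : ℝ) ^ 2 + (q : ℝ) ^ 2) = α⁻¹ := by
    rw [hnorm, Real.sqrt_sq (by positivity)]
  refine ⟨(p, q), ⟨hpq, ?_⟩, ?_⟩
  · rw [hnorm, inv_pow, one_div]
    gcongr
    nlinarith
  · simp only [intDirection, hsqrt, div_inv_eq_mul, ← hp, ← hq]

lemma one_le_intCast_sq {r : ℤ} (hr : r ≠ 0) : (1 : ℝ) ≤ (r : ℝ) ^ 2 := by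
  exact_mod_cast (one_le_sq_iff_one_le_abs r).mpr (Int.one_le_abs hr)

def nonzeroIcc (m : ℕ) : Finset ℤ := (Finset.Icc (-(m : ℤ)) m).erase 0

lemma card_nonzeroIcc (m : ℕ) : (nonzeroIcc m).card = 2 * m := by
  rw [nonzeroIcc, Finset.card_erase_of_mem (by simp), Int.card_Icc]
  omega

lemma mem_nonzeroIcc_of_sq_le {r : ℤ} {M : ℝ} (hr : r ≠ 0) (h : (r : ℝ) ^ 2 ≤ M) :
    r ∈ nonzeroIcc (Nat.sqrt ⌊M⌋₊) := by
  have hcast : ((r.natAbs ^ 2 : ℕ) : ℝ) = (r : ℝ) ^ 2 := by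
    rw [Nat.cast_pow, Nat.cast_natAbs, Int.cast_abs, sq_abs]
  have hle : r.natAbs ≤ Nat.sqrt ⌊M⌋₊ :=
    Nat.le_sqrt'.mpr (Nat.le_floor (hcast ▸ h))
  simp only [nonzeroIcc, Finset.mem_erase, Finset.mem_Icc]
  omega

lemma primitiveVectors_subset (R : ℝ) :
    primitiveVectors R ⊆ ↑({(1, 0), (-1, 0), (0, 1), (0, -1)} ∪
      nonzeroIcc (Nat.sqrt ⌊R - 1⌋₊) ×ˢ nonzeroIcc (Nat.sqrt ⌊R - 1⌋₊)) := by
  rintro ⟨p, q⟩ ⟨hpq, hR⟩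
  rcases eq_or_ne q 0 with rfl | hq
  · rcases Int.isUnit_iff.mp (isCoprime_zero_right.mp hpq) with rfl | rfl <;> simp
  rcases eq_or_ne p 0 with rfl | hp
  · rcases Int.isUnit_iff.mp (isCoprime_zero_left.mp hpq) with rfl | rfl <;> simp
  have hp' := one_le_intCast_sq hp
  have hq' := one_le_intCast_sq hq
  simp only [Finset.coe_union, Finset.coe_product, Set.mem_union, Set.mem_prod, Finset.mem_coe]
  exact Or.inr ⟨mem_nonzeroIcc_of_sq_le hp (by linarith),
    mem_nonzeroIcc_of_sq_le hq (by linarith)⟩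

lemma primitiveVectors_finite (R : ℝ) : (primitiveVectors R).Finite :=
  (Finset.finite_toSet _).subset (primitiveVectors_subset R)

lemma primitiveVectors_eq_empty_of_lt_one {R : ℝ} (hR : R < 1) : primitiveVectors R = ∅ := by
  refine Set.eq_empty_iff_forall_notMem.mpr fun ⟨p, q⟩ ⟨hpq, hle⟩ => ?_
  have hp : p ≠ 0 ∨ q ≠ 0 := by
    by_contra! h
    rw [h.1, h.2] at hpq
    exact not_isCoprime_zero_zero hpq
  rcases hp with hp | hq
  · linarith [one_le_intCast_sq hp, sq_nonneg (q : ℝ)]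
  · linarith [one_le_intCast_sq hq, sq_nonneg (p : ℝ)]

lemma ncard_primitiveVectors_le {R : ℝ} (hR : 0 ≤ R) :
    ((primitiveVectors R).ncard : ℝ) ≤ 4 * R := by
  rcases lt_or_ge R 1 with hR1 | hR1
  · simp [primitiveVectors_eq_empty_of_lt_one hR1, hR]
  set m := Nat.sqrt ⌊R - 1⌋₊
  have hm : ((m ^ 2 : ℕ) : ℝ) ≤ R - 1 :=
    (Nat.cast_le.mpr (Nat.sqrt_le' _)).trans (Nat.floor_le (by linarith))
  have hcard := (Set.ncard_le_ncard (primitiveVectors_subset R) (Finset.finite_toSet _)).trans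
    ((Set.ncard_coe_finset _).trans_le (Finset.card_union_le _ _))
  rw [Finset.card_product, card_nonzeroIcc] at hcard
  have hA : ({(1, 0), (-1, 0), (0, 1), (0, -1)} : Finset (ℤ × ℤ)).card = 4 := by decide
  rw [hA] at hcard
  have : ((primitiveVectors R).ncard : ℝ) ≤ 4 + 4 * ((m ^ 2 : ℕ) : ℝ) := by
    exact_mod_cast hcard.trans_eq (by ring)
  linarith

/-- If `ω ⊆ 𝕋²` contains an open (Euclidean) ball of radius `ε`, then there are at most
`1/ε²` directions `v ∈ 𝕊¹` such that some geodesic `L_{z,v}` is disjoint from `ω`. -/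
theorem stmt0 (ε : ℝ) (hε : 0 < ε) (ω : Set T2)
    (hball : ∃ c : ℝ × ℝ, ∀ p : ℝ × ℝ,
      Real.sqrt ((p.1 - c.1)^2 + (p.2 - c.2)^2) < ε → torusProj p ∈ ω) :
    {v : ℝ × ℝ | v.1^2 + v.2^2 = 1 ∧ ∃ z : T2, torusLine z v ∩ ω = ∅}.Finite ∧
    (Nat.card {v : ℝ × ℝ | v.1^2 + v.2^2 = 1 ∧ ∃ z : T2, torusLine z v ∩ ω = ∅} : ℝ)
      ≤ 1 / ε^2 := by
  obtain ⟨c, hc⟩ := hball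
  set T := primitiveVectors (1 / (4 * ε ^ 2))
  have hsub : {v : ℝ × ℝ | v.1^2 + v.2^2 = 1 ∧ ∃ z : T2, torusLine z v ∩ ω = ∅} ⊆
      intDirection '' T := by
    rintro v ⟨hv, z, hz⟩
    obtain ⟨d, hd⟩ := exists_forall_le_abs_of_torusLine_inter_eq_empty hc hv hz
    exact mem_image_intDirection_of_forall_le_abs hε hv hd
  have hT : T.Finite := primitiveVectors_finite _
  refine ⟨(hT.image _).subset hsub, ?_⟩
  rw [Nat.card_coe_set_eq]
  calc _ ≤ ((intDirection '' T).ncard : ℝ) := by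
        exact_mod_cast Set.ncard_le_ncard hsub (hT.image _)
    _ ≤ T.ncard := by exact_mod_cast Set.ncard_image_le hT
    _ ≤ 4 * (1 / (4 * ε ^ 2)) := ncard_primitiveVectors_le (by positivity)
    _ = 1 / ε ^ 2 := by field_simp
end
end

section
/- Let η ≥ 1 and c > 0, and set Γ_c = {(x,y) ∈ ℝ² : x = c|y|^η}. There exist C > 1 and ε > 0 such that for all (x₀, y₀) with x₀ ≥ 0, x₀ < ε and |y₀| < ε: C⁻¹ · | |y₀|^η − c⁻¹x₀ | ≤ dist((x₀,y₀), Γ_c) ≤ C · | |y₀|^η − c⁻¹x₀ |. -/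
noncomputable section

/-- The point `(a, b)` in Euclidean `ℝ²`. -/
def pt (a b : ℝ) : EuclideanSpace ℝ (Fin 2) := (WithLp.equiv 2 (Fin 2 → ℝ)).symm ![a, b]

lemma pt_apply_zero (a b : ℝ) : pt a b 0 = a := rfl
lemma pt_apply_one (a b : ℝ) : pt a b 1 = b := rfl

/-- Coordinate-wise bound for Euclidean distance in `ℝ²`. -/
lemma coord_le_dist (x y : EuclideanSpace ℝ (Fin 2)) (i : Fin 2) :
    |x i - y i| ≤ dist x y := by
  rw [EuclideanSpace.dist_eq]
  have h1 : dist (x i) (y i) ^ 2 ≤ ∑ j, dist (x j) (y j) ^ 2 :=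
    Finset.single_le_sum (f := fun j => dist (x j) (y j) ^ 2)
      (fun j _ => sq_nonneg _) (Finset.mem_univ i)
  calc |x i - y i| = Real.sqrt (dist (x i) (y i) ^ 2) := by
        rw [Real.sqrt_sq_eq_abs, Real.dist_eq, abs_abs]
    _ ≤ _ := Real.sqrt_le_sqrt h1

lemma dist_pt_same_snd (a a' b : ℝ) : dist (pt a b) (pt a' b) = |a - a'| := by
  rw [EuclideanSpace.dist_eq, Fin.sum_univ_two]
  simp only [pt_apply_zero, pt_apply_one, dist_self]
  rw [Real.dist_eq]
  simp [Real.sqrt_sq_eq_abs]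

lemma le_infDist' {x : EuclideanSpace ℝ (Fin 2)} {s : Set (EuclideanSpace ℝ (Fin 2))} {b : ℝ}
    (hs : s.Nonempty) (H : ∀ y ∈ s, b ≤ dist x y) : b ≤ Metric.infDist x s := by
  by_contra h
  push_neg at h
  obtain ⟨y, hy, hlt⟩ := (Metric.infDist_lt_iff hs).mp h
  exact absurd (H y hy) (not_le.mpr hlt)

/-- Lipschitz bound for `t ↦ t ^ η` on `[0,1]` when `η ≥ 1`. -/
lemma rpow_sub_rpow_le {η u v : ℝ} (hη : 1 ≤ η) (hv : 0 ≤ v) (hvu : v ≤ u) (hu : u ≤ 1) :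
    u ^ η - v ^ η ≤ η * (u - v) := by
  rcases eq_or_lt_of_le hvu with rfl | hlt
  · simp
  · obtain ⟨ξ, hξ, hξ'⟩ := exists_hasDerivAt_eq_slope (fun t => t ^ η)
      (fun t => η * t ^ (η - 1)) hlt
      (fun t _ => (Real.hasDerivAt_rpow_const (Or.inr hη)).continuousAt.continuousWithinAt)
      (fun t _ => Real.hasDerivAt_rpow_const (Or.inr hη))
    have hξ0 : 0 ≤ ξ := le_of_lt (lt_of_le_of_lt hv hξ.1)
    have hξ1 : ξ ≤ 1 := le_trans (le_of_lt hξ.2) hu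
    have hbound : η * ξ ^ (η - 1) ≤ η :=
      calc η * ξ ^ (η - 1) ≤ η * 1 := by
            have := Real.rpow_le_one hξ0 hξ1 (by linarith : (0:ℝ) ≤ η - 1)
            nlinarith
        _ = η := mul_one η
    have huv : 0 < u - v := by linarith
    have := hξ'.symm.le.trans hbound
    rw [div_le_iff₀ huv] at this
    linarith

lemma abs_rpow_sub_rpow_le {η u v : ℝ} (hη : 1 ≤ η) (hu0 : 0 ≤ u) (hu : u ≤ 1)
    (hv0 : 0 ≤ v) (hv : v ≤ 1) : |u ^ η - v ^ η| ≤ η * |u - v| := by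
  rcases le_total v u with h | h
  · rw [abs_of_nonneg (by linarith [Real.rpow_le_rpow hv0 h (by linarith : (0:ℝ) ≤ η)]),
      abs_of_nonneg (by linarith)]
    exact rpow_sub_rpow_le hη hv0 h hu
  · rw [abs_sub_comm, abs_sub_comm u v,
      abs_of_nonneg (by linarith [Real.rpow_le_rpow hu0 h (by linarith : (0:ℝ) ≤ η)]),
      abs_of_nonneg (by linarith)]
    exact rpow_sub_rpow_le hη hu0 h hv

/-- For `η ≥ 1`, `c > 0` and `Γ_c = {(x,y) : x = c|y|^η}`, there are `C > 1`, `ε > 0`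
such that for points `(x₀,y₀)` with `x₀ ≥ 0`, `x₀, |y₀| < ε`:
`C⁻¹ ||y₀|^η − c⁻¹x₀| ≤ dist((x₀,y₀), Γ_c) ≤ C ||y₀|^η − c⁻¹x₀|`. -/
theorem stmt7 (η c : ℝ) (hη : 1 ≤ η) (hc : 0 < c) :
    ∃ C : ℝ, 1 < C ∧ ∃ ε : ℝ, 0 < ε ∧
      ∀ x₀ y₀ : ℝ, 0 ≤ x₀ → x₀ < ε → |y₀| < ε →
        C⁻¹ * |(|y₀| ^ η - c⁻¹ * x₀)| ≤
          Metric.infDist (pt x₀ y₀)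
            {w : EuclideanSpace ℝ (Fin 2) | w 0 = c * |w 1| ^ η} ∧
        Metric.infDist (pt x₀ y₀)
            {w : EuclideanSpace ℝ (Fin 2) | w 0 = c * |w 1| ^ η}
          ≤ C * |(|y₀| ^ η - c⁻¹ * x₀)| := by
  have hc' : (0:ℝ) < c⁻¹ := inv_pos.mpr hc
  refine ⟨1 + c + c⁻¹ + η, by linarith, c / (2 * (c + 1)), by positivity, ?_⟩
  set C : ℝ := 1 + c + c⁻¹ + η with hC
  set ε : ℝ := c / (2 * (c + 1)) with hε
  have hC1 : (1:ℝ) < C := by rw [hC]; linarith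
  have hC0 : (0:ℝ) < C := by linarith
  have hεhalf : ε ≤ 1 / 2 := by
    rw [hε, div_le_div_iff₀ (by positivity) (by norm_num)]
    linarith
  intro x₀ y₀ hx0 hxε hyε
  set S : Set (EuclideanSpace ℝ (Fin 2)) := {w | w 0 = c * |w 1| ^ η} with hS
  set D : ℝ := |(|y₀| ^ η - c⁻¹ * x₀)| with hD
  have hD0 : 0 ≤ D := abs_nonneg _
  have hη0 : (0:ℝ) ≤ η := by linarith
  have hSne : S.Nonempty := by
    refine ⟨pt 0 0, ?_⟩
    simp only [hS, Set.mem_setOf_eq, pt_apply_zero, pt_apply_one, abs_zero]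
    rw [Real.zero_rpow (by linarith : η ≠ 0)]
    ring
  -- Upper bound
  have hmem : pt (c * |y₀| ^ η) y₀ ∈ S := by
    simp only [hS, Set.mem_setOf_eq, pt_apply_zero, pt_apply_one]
  have hupper : Metric.infDist (pt x₀ y₀) S ≤ C * D := by
    calc Metric.infDist (pt x₀ y₀) S ≤ dist (pt x₀ y₀) (pt (c * |y₀| ^ η) y₀) :=
          Metric.infDist_le_dist_of_mem hmem
      _ = |x₀ - c * |y₀| ^ η| := dist_pt_same_snd _ _ _
      _ = c * D := by
          have h : x₀ - c * |y₀| ^ η = c * (c⁻¹ * x₀ - |y₀| ^ η) := by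
            rw [mul_sub, ← mul_assoc, mul_inv_cancel₀ hc.ne', one_mul]
          rw [h, abs_mul, abs_of_pos hc, hD, abs_sub_comm]
      _ ≤ C * D := by
          apply mul_le_mul_of_nonneg_right _ hD0
          rw [hC]; linarith
  refine ⟨?_, hupper⟩
  -- Lower bound
  have hy1 : |y₀| ≤ 1 := by linarith
  have hDsmall : D ≤ 1 / 2 := by
    have h1 : |y₀| ^ η ≤ ε ^ η := Real.rpow_le_rpow (abs_nonneg _) (le_of_lt hyε) hη0
    have h2 : ε ^ η ≤ ε := by
      calc ε ^ η ≤ ε ^ (1:ℝ) :=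
            Real.rpow_le_rpow_of_exponent_ge (by positivity) (by linarith) hη
        _ = ε := Real.rpow_one ε
    have h3 : c⁻¹ * x₀ ≤ c⁻¹ * ε := by nlinarith
    have h4 : c⁻¹ * ε = 1 / (2 * (c + 1)) := by
      rw [hε]; field_simp
    have h5 : (1:ℝ) / (2 * (c + 1)) ≤ 1 / 2 := by
      rw [div_le_div_iff₀ (by positivity) (by norm_num)]; linarith
    rw [hD, abs_le]
    constructor
    · have : 0 ≤ |y₀| ^ η := Real.rpow_nonneg (abs_nonneg _) η
      nlinarith
    · have : 0 ≤ c⁻¹ * x₀ := by positivity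
      nlinarith
  apply le_infDist' hSne
  intro w hw
  have hw0 : w 0 = c * |w 1| ^ η := hw
  have hcoord0 : |x₀ - w 0| ≤ dist (pt x₀ y₀) w := by
    have := coord_le_dist (pt x₀ y₀) w 0
    rwa [pt_apply_zero] at this
  have hcoord1 : |y₀ - w 1| ≤ dist (pt x₀ y₀) w := by
    have := coord_le_dist (pt x₀ y₀) w 1
    rwa [pt_apply_one] at this
  rcases le_or_gt |w 1| 1 with hw1 | hw1
  · -- near case
    obtain ⟨d, hd⟩ : ∃ d : ℝ, dist (pt x₀ y₀) w = d := ⟨_, rfl⟩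
    rw [hd] at hcoord0 hcoord1
    rw [hd]
    have hd0 : (0:ℝ) ≤ d := hd ▸ dist_nonneg
    have hlip : |(|y₀| ^ η - |w 1| ^ η)| ≤ η * |(|y₀| - |w 1|)| :=
      abs_rpow_sub_rpow_le hη (abs_nonneg _) hy1 (abs_nonneg _) hw1
    have habs : |(|y₀| - |w 1|)| ≤ |y₀ - w 1| := abs_abs_sub_abs_le_abs_sub _ _
    have h5 : |(|y₀| ^ η - |w 1| ^ η)| ≤ η * d := by
      calc |(|y₀| ^ η - |w 1| ^ η)| ≤ η * |(|y₀| - |w 1|)| := hlip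
        _ ≤ η * |y₀ - w 1| := mul_le_mul_of_nonneg_left habs hη0
        _ ≤ η * d := mul_le_mul_of_nonneg_left hcoord1 hη0
    have h1 : c * D = |c * |y₀| ^ η - x₀| := by
      have h : c * |y₀| ^ η - x₀ = c * (|y₀| ^ η - c⁻¹ * x₀) := by
        rw [mul_sub, ← mul_assoc, mul_inv_cancel₀ hc.ne', one_mul]
      rw [h, abs_mul, abs_of_pos hc, hD]
    have h3 : |c * |y₀| ^ η - c * |w 1| ^ η| = c * |(|y₀| ^ η - |w 1| ^ η)| := by
      rw [← mul_sub, abs_mul, abs_of_pos hc]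
    have h2 : |c * |y₀| ^ η - x₀| ≤ |c * |y₀| ^ η - c * |w 1| ^ η| + |c * |w 1| ^ η - x₀| := by
      calc |c * |y₀| ^ η - x₀|
          = |(c * |y₀| ^ η - c * |w 1| ^ η) + (c * |w 1| ^ η - x₀)| := by ring_nf
        _ ≤ _ := abs_add_le _ _
    have h4 : |c * |w 1| ^ η - x₀| ≤ d := by
      rw [← hw0, abs_sub_comm]
      exact hcoord0
    have key : c * D ≤ c * (η * d) + d := by
      rw [h1]
      calc |c * |y₀| ^ η - x₀| ≤ |c * |y₀| ^ η - c * |w 1| ^ η| + |c * |w 1| ^ η - x₀| := h2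
        _ = c * |(|y₀| ^ η - |w 1| ^ η)| + |c * |w 1| ^ η - x₀| := by rw [h3]
        _ ≤ c * (η * d) + d := add_le_add (mul_le_mul_of_nonneg_left h5 hc.le) h4
    have hcc : c * c⁻¹ = 1 := mul_inv_cancel₀ hc.ne'
    have hCge : 1 + c * η ≤ c * C := by
      have hCexp : c * C = c + c ^ 2 + c * c⁻¹ + c * η := by rw [hC]; ring
      rw [hCexp, hcc]
      have h6 : 0 ≤ c ^ 2 := sq_nonneg c
      linarith
    have step1 : c * D ≤ c * C * d := by
      have h7 : (1 + c * η) * d ≤ c * C * d := mul_le_mul_of_nonneg_right hCge hd0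
      have h8 : (1 + c * η) * d = c * (η * d) + d := by ring
      linarith
    have hDC : D ≤ C * d := by
      have : c * D ≤ c * (C * d) := by linarith [step1, (by ring : c * C * d = c * (C * d))]
      exact le_of_mul_le_mul_left this hc
    rw [inv_mul_le_iff₀ hC0]
    exact hDC
  · -- far case
    have h1 : 1 - |y₀| ≤ |(|y₀| - |w 1|)| := by
      rw [abs_sub_comm]
      calc 1 - |y₀| ≤ |w 1| - |y₀| := by linarith
        _ ≤ |(|w 1| - |y₀|)| := le_abs_self _
    have h2 : (1:ℝ)/2 ≤ dist (pt x₀ y₀) w := by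
      have habs : |(|y₀| - |w 1|)| ≤ |y₀ - w 1| := abs_abs_sub_abs_le_abs_sub _ _
      have : |y₀| < 1/2 := lt_of_lt_of_le hyε hεhalf
      linarith
    have : C⁻¹ * D ≤ D := by
      have hCinv : C⁻¹ ≤ 1 := by
        rw [inv_le_one_iff₀]; right; linarith
      exact mul_le_of_le_one_left hD0 hCinv
    linarith
end
end

section
/- Let V ∈ C⁰(𝕊¹) be nonnegative, and let ψ ∈ C^∞(𝕊¹) be nonnegative, vanishing on a neighborhood of {V = 0}, with ψ ≤ CV and |ψ''| ≤ CV for some C > 0. Then there exists C' > 0 such that for any u ∈ H²(𝕊¹), λ > 0, E ∈ ℝ, with f := −u'' + iλV u − E u, one has ‖ψ^{1/2} u'‖_{L²} ≤ C'(1 + max(0,E)^{1/2}) λ^{−1/2} |⟨f,u⟩|^{1/2} + C'‖f‖_{L²}. -/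
open MeasureTheory intervalIntegral
open scoped ContDiff

noncomputable section

private lemma perDeriv' {F : Type*} [NormedAddCommGroup F] [NormedSpace ℝ F]
    {g : ℝ → F} (hp : ∀ x, g (x + 1) = g x) (x : ℝ) :
    deriv g (x + 1) = deriv g x := by
  have h : (fun y => g (y + 1)) = g := funext hp
  rw [← deriv_comp_add_const (a := 1), h]

private lemma perInt' {g g' : ℝ → ℂ} (h : ∀ x, HasDerivAt g (g' x) x)
    (hc : Continuous g') (hp : g 1 = g 0) :
    ∫ x in (0:ℝ)..1, g' x = 0 := by
  rw [intervalIntegral.integral_eq_sub_of_hasDerivAt (fun x _ => h x)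
    (hc.intervalIntegrable 0 1), hp, sub_self]

private lemma mulStar (z : ℂ) : z * star z = ((‖z‖^2 : ℝ) : ℂ) := by
  rw [show star z = (starRingEnd ℂ) z from rfl, Complex.mul_conj, Complex.normSq_eq_norm_sq]

private lemma castInt (r : ℝ → ℝ) (g : ℝ → ℂ) (h : ∀ x, g x = ((r x : ℝ) : ℂ)) :
    ∫ x in (0:ℝ)..1, g x = ((∫ x in (0:ℝ)..1, r x : ℝ) : ℂ) := by
  rw [show g = fun x => ((r x:ℝ):ℂ) from funext h]
  exact intervalIntegral.integral_ofReal

private lemma starInt (g : ℝ → ℂ) :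
    (∫ x in (0:ℝ)..1, star (g x)) = star (∫ x in (0:ℝ)..1, g x) := by
  simp only [intervalIntegral, Complex.star_def, ← integral_conj, map_sub]

private lemma sqrtAddLe (a b : ℝ) (ha : 0 ≤ a) (hb : 0 ≤ b) :
    Real.sqrt (a + b) ≤ Real.sqrt a + Real.sqrt b := by
  nlinarith [Real.sq_sqrt ha, Real.sq_sqrt hb, Real.sqrt_nonneg a, Real.sqrt_nonneg b,
    Real.sq_sqrt (by linarith : (0:ℝ) ≤ a + b), Real.sqrt_nonneg (a+b),
    mul_nonneg (Real.sqrt_nonneg a) (Real.sqrt_nonneg b)]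

private lemma sqrtOneAdd {m : ℝ} (hm : 0 ≤ m) :
    Real.sqrt (1 + m) ≤ 1 + Real.sqrt m := by
  nlinarith [Real.sq_sqrt hm, Real.sqrt_nonneg m, Real.sqrt_nonneg (1+m),
    Real.sq_sqrt (by linarith : (0:ℝ) ≤ 1 + m)]

set_option maxHeartbeats 1000000 in
/-- Derivative pairing estimate: for nonnegative continuous periodic `V`, nonnegative smooth
periodic `ψ` vanishing near `{V = 0}` with `ψ ≤ CV` and `|ψ''| ≤ CV`, there is `C' > 0` so
that for all periodic `C²` functions `u`, `λ > 0`, `E ∈ ℝ`, with `f = −u'' + iλVu − Eu`: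
`‖ψ^{1/2}u'‖ ≤ C'(1 + max(0,E)^{1/2})λ^{−1/2}|⟨f,u⟩|^{1/2} + C'‖f‖`. -/
theorem stmt11 (V : ℝ → ℝ) (hV : Continuous V) (hVper : ∀ x, V (x + 1) = V x)
    (hVnn : ∀ x, 0 ≤ V x)
    (ψ : ℝ → ℝ) (hψ : ContDiff ℝ (⊤ : ℕ∞) ψ) (hψper : ∀ x, ψ (x + 1) = ψ x)
    (hψnn : ∀ x, 0 ≤ ψ x)
    (C : ℝ) (hC : 0 < C)
    (hvanish : ∃ U : Set ℝ, IsOpen U ∧ {x : ℝ | V x = 0} ⊆ U ∧ ∀ x ∈ U, ψ x = 0)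
    (hψV : ∀ x, ψ x ≤ C * V x) (hψ'' : ∀ x, |deriv (deriv ψ) x| ≤ C * V x) :
    ∃ C' : ℝ, 0 < C' ∧ ∀ u : ℝ → ℂ, ContDiff ℝ 2 u → (∀ x, u (x + 1) = u x) →
      ∀ lam : ℝ, 0 < lam → ∀ E : ℝ,
        (∫ x in (0:ℝ)..1, ψ x * ‖deriv u x‖^2) ^ ((1:ℝ)/2)
          ≤ C' * (1 + (max 0 E) ^ ((1:ℝ)/2)) * lam ^ (-(1:ℝ)/2) *
              ‖∫ x in (0:ℝ)..1,
                (-(deriv (deriv u) x) + Complex.I * lam * V x * u x - E * u x) *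
                  (starRingEnd ℂ) (u x)‖ ^ ((1:ℝ)/2)
            + C' * (∫ x in (0:ℝ)..1,
                ‖-(deriv (deriv u) x) + Complex.I * lam * V x * u x - E * u x‖^2)
                  ^ ((1:ℝ)/2) := by
  obtain ⟨x₀, -, hx₀⟩ := isCompact_Icc.exists_isMaxOn (Set.nonempty_Icc.mpr zero_le_one)
    hψ.continuous.continuousOn
  set M := ψ x₀ with hMdef
  have hM0 : 0 ≤ M := hψnn x₀
  have hMb : ∀ x ∈ Set.Icc (0:ℝ) 1, ψ x ≤ M := fun x hx => hx₀ hx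
  set A := C * (1 + M) with hAdef
  have hA : 0 < A := mul_pos hC (by linarith)
  refine ⟨Real.sqrt A + 1, by positivity, ?_⟩
  intro u hu hper lam hlam E
  -- derivative facts
  have hudiff : Differentiable ℝ u := hu.differentiable (by norm_num)
  have hud : ∀ x, HasDerivAt u (deriv u x) x := fun x => (hudiff x).hasDerivAt
  have h2 : ContDiff ℝ (1+1 : WithTop ℕ∞) u := by exact_mod_cast hu
  have hu1 : ContDiff ℝ 1 (deriv u) := (contDiff_succ_iff_deriv.mp h2).2.2
  have hu'd : ∀ x, HasDerivAt (deriv u) (deriv (deriv u) x) x :=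
    fun x => ((hu1.differentiable one_ne_zero) x).hasDerivAt
  have cu : Continuous u := hu.continuous
  have cu' : Continuous (deriv u) := hu1.continuous
  have cu'' : Continuous (deriv (deriv u)) := hu1.continuous_deriv le_rfl
  have hψ1 : ContDiff ℝ ∞ (deriv ψ) := (contDiff_infty_iff_deriv.mp (hψ.of_le (by simp))).2
  have hψd : ∀ x, HasDerivAt ψ (deriv ψ x) x :=
    fun x => ((hψ.differentiable (by simp)) x).hasDerivAt
  have hψ'd : ∀ x, HasDerivAt (deriv ψ) (deriv (deriv ψ) x) x :=
    fun x => ((hψ1.differentiable (by simp)) x).hasDerivAt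
  have cψ : Continuous ψ := hψ.continuous
  have cψ' : Continuous (deriv ψ) := hψ1.continuous
  have cψ'' : Continuous (deriv (deriv ψ)) := hψ1.continuous_deriv (by exact_mod_cast le_top)
  -- periodicity at the endpoints
  have e_u : u 1 = u 0 := by simpa using hper 0
  have e_u' : deriv u 1 = deriv u 0 := by simpa using perDeriv' hper 0
  have e_ψ : ψ 1 = ψ 0 := by simpa using hψper 0
  have e_ψ' : deriv ψ 1 = deriv ψ 0 := by simpa using perDeriv' hψper 0
  -- the source term
  set f : ℝ → ℂ :=
    fun x => -(deriv (deriv u) x) + Complex.I * (lam:ℂ) * ((V x : ℝ):ℂ) * u x - ((E:ℝ):ℂ) * u x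
    with hfdef
  have cf : Continuous f := by
    apply Continuous.sub
    · exact cu''.neg.add (((continuous_const.mul (Complex.continuous_ofReal.comp hV)).mul cu))
    · exact continuous_const.mul cu
  -- continuity of complexified pieces
  have cV : Continuous fun x => ((V x : ℝ):ℂ) := Complex.continuous_ofReal.comp hV
  have cΨ : Continuous fun x => ((ψ x : ℝ):ℂ) := Complex.continuous_ofReal.comp cψ
  have cΨ' : Continuous fun x => ((deriv ψ x : ℝ):ℂ) := Complex.continuous_ofReal.comp cψ'
  have cΨ'' : Continuous fun x => ((deriv (deriv ψ) x : ℝ):ℂ) :=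
    Complex.continuous_ofReal.comp cψ''
  -- real quantities
  set P : ℝ := ∫ x in (0:ℝ)..1, ψ x * ‖deriv u x‖^2 with hPdef
  set Q : ℝ := ∫ x in (0:ℝ)..1, V x * ‖u x‖^2 with hQdef
  set W : ℝ := ∫ x in (0:ℝ)..1, ψ x * ‖u x‖^2 with hWdef
  set D : ℝ := ∫ x in (0:ℝ)..1, deriv (deriv ψ) x * ‖u x‖^2 with hDdef
  set S : ℝ := ∫ x in (0:ℝ)..1, ‖f x‖^2 with hSdef
  set N : ℝ := ∫ x in (0:ℝ)..1, ‖u x‖^2 with hNdef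
  set N1 : ℝ := ∫ x in (0:ℝ)..1, ‖deriv u x‖^2 with hN1def
  set QW : ℝ := ∫ x in (0:ℝ)..1, ψ x * (V x * ‖u x‖^2) with hQWdef
  set T : ℝ := ∫ x in (0:ℝ)..1, (((ψ x : ℝ):ℂ) * (f x * star (u x))).re with hTdef
  set R : ℂ := ∫ x in (0:ℝ)..1, f x * (starRingEnd ℂ) (u x) with hRdef
  set G1 : ℂ := ∫ x in (0:ℝ)..1, ((deriv ψ x : ℝ):ℂ) * (deriv u x * star (u x)) with hG1def
  set G2 : ℂ := ∫ x in (0:ℝ)..1, ((ψ x : ℝ):ℂ) * (deriv (deriv u) x * star (u x)) with hG2def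

  -- integrability of the complex integrands
  have i_g1 : IntervalIntegrable (fun x => ((deriv ψ x : ℝ):ℂ) * (deriv u x * star (u x)))
      volume 0 1 := (cΨ'.mul (cu'.mul cu.star)).intervalIntegrable 0 1
  have i_g2 : IntervalIntegrable (fun x => ((ψ x : ℝ):ℂ) * (deriv (deriv u) x * star (u x)))
      volume 0 1 := (cΨ.mul (cu''.mul cu.star)).intervalIntegrable 0 1
  have i_g3 : IntervalIntegrable (fun x => ((ψ x : ℝ):ℂ) * (deriv u x * star (deriv u x)))
      volume 0 1 := (cΨ.mul (cu'.mul cu'.star)).intervalIntegrable 0 1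
  have i_g4 : IntervalIntegrable (fun x => ((deriv (deriv ψ) x : ℝ):ℂ) * (u x * star (u x)))
      volume 0 1 := (cΨ''.mul (cu.mul cu.star)).intervalIntegrable 0 1
  have i_g5 : IntervalIntegrable (fun x => ((deriv ψ x : ℝ):ℂ) * (u x * star (deriv u x)))
      volume 0 1 := (cΨ'.mul (cu.mul cu'.star)).intervalIntegrable 0 1
  have i_g6 : IntervalIntegrable (fun x => deriv (deriv u) x * star (u x)) volume 0 1 :=
    (cu''.mul cu.star).intervalIntegrable 0 1
  have i_g7 : IntervalIntegrable (fun x => deriv u x * star (deriv u x)) volume 0 1 :=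
    (cu'.mul cu'.star).intervalIntegrable 0 1
  have i_fu : IntervalIntegrable (fun x => ((ψ x : ℝ):ℂ) * (f x * star (u x))) volume 0 1 :=
    (cΨ.mul (cf.mul cu.star)).intervalIntegrable 0 1
  -- cast computations
  have hG3 : (∫ x in (0:ℝ)..1, ((ψ x : ℝ):ℂ) * (deriv u x * star (deriv u x))) = ((P:ℝ):ℂ) := by
    rw [hPdef]; apply castInt; intro x; rw [mulStar]; push_cast; ring
  have hG4 : (∫ x in (0:ℝ)..1, ((deriv (deriv ψ) x : ℝ):ℂ) * (u x * star (u x)))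
      = ((D:ℝ):ℂ) := by
    rw [hDdef]; apply castInt; intro x; rw [mulStar]; push_cast; ring
  have hG7 : (∫ x in (0:ℝ)..1, deriv u x * star (deriv u x)) = ((N1:ℝ):ℂ) := by
    rw [hN1def]; apply castInt; intro x; rw [mulStar]
  have hQc : (∫ x in (0:ℝ)..1, ((V x : ℝ):ℂ) * (u x * star (u x))) = ((Q:ℝ):ℂ) := by
    rw [hQdef]; apply castInt; intro x; rw [mulStar]; push_cast; ring
  have hNc : (∫ x in (0:ℝ)..1, (u x * star (u x))) = ((N:ℝ):ℂ) := by
    rw [hNdef]; apply castInt; intro x; rw [mulStar]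
  have hQWc : (∫ x in (0:ℝ)..1, ((ψ x : ℝ):ℂ) * (((V x : ℝ):ℂ) * (u x * star (u x))))
      = ((QW:ℝ):ℂ) := by
    rw [hQWdef]; apply castInt; intro x; rw [mulStar]; push_cast; ring
  have hWc : (∫ x in (0:ℝ)..1, ((ψ x : ℝ):ℂ) * (u x * star (u x))) = ((W:ℝ):ℂ) := by
    rw [hWdef]; apply castInt; intro x; rw [mulStar]; push_cast; ring
  -- first integration by parts : G1 + G2 + P = 0
  have key1 : G1 + G2 + ((P:ℝ):ℂ) = 0 := by
    have h := perInt'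
      (g := fun x => ((ψ x : ℝ):ℂ) * (deriv u x * star (u x)))
      (g' := fun x => ((deriv ψ x : ℝ):ℂ) * (deriv u x * star (u x))
        + ((ψ x : ℝ):ℂ) * (deriv (deriv u) x * star (u x) + deriv u x * star (deriv u x)))
      (fun x => ((hψd x).ofReal_comp.mul ((hu'd x).mul (hud x).star)))
      ((cΨ'.mul (cu'.mul cu.star)).add (cΨ.mul ((cu''.mul cu.star).add (cu'.mul cu'.star))))
      (by simp [e_u, e_u', e_ψ])
    have h2 : (∫ x in (0:ℝ)..1, (((deriv ψ x : ℝ):ℂ) * (deriv u x * star (u x))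
        + (((ψ x : ℝ):ℂ) * (deriv (deriv u) x * star (u x))
          + ((ψ x : ℝ):ℂ) * (deriv u x * star (deriv u x))))) = 0 := by
      rw [← h]; apply intervalIntegral.integral_congr; intro x _; ring
    rw [intervalIntegral.integral_add i_g1 (i_g2.add i_g3),
      intervalIntegral.integral_add i_g2 i_g3, hG3, ← hG1def, ← hG2def] at h2
    linear_combination h2
  -- second integration by parts : D + G1 + star G1 = 0
  have hG5 : (∫ x in (0:ℝ)..1, ((deriv ψ x : ℝ):ℂ) * (u x * star (deriv u x))) = star G1 := by
    rw [hG1def, ← starInt]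
    apply intervalIntegral.integral_congr; intro x _
    simp only [star_mul', star_star, Complex.star_def, Complex.conj_ofReal,
      Complex.conj_conj]
    ring
  have key2 : ((D:ℝ):ℂ) + G1 + star G1 = 0 := by
    have h := perInt'
      (g := fun x => ((deriv ψ x : ℝ):ℂ) * (u x * star (u x)))
      (g' := fun x => ((deriv (deriv ψ) x : ℝ):ℂ) * (u x * star (u x))
        + ((deriv ψ x : ℝ):ℂ) * (deriv u x * star (u x) + u x * star (deriv u x)))
      (fun x => ((hψ'd x).ofReal_comp.mul ((hud x).mul (hud x).star)))
      ((cΨ''.mul (cu.mul cu.star)).add (cΨ'.mul ((cu'.mul cu.star).add (cu.mul cu'.star))))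
      (by simp [e_u, e_u', e_ψ'])
    have h2 : (∫ x in (0:ℝ)..1, (((deriv (deriv ψ) x : ℝ):ℂ) * (u x * star (u x))
        + (((deriv ψ x : ℝ):ℂ) * (deriv u x * star (u x))
          + ((deriv ψ x : ℝ):ℂ) * (u x * star (deriv u x))))) = 0 := by
      rw [← h]; apply intervalIntegral.integral_congr; intro x _; ring
    rw [intervalIntegral.integral_add i_g4 (i_g1.add i_g5),
      intervalIntegral.integral_add i_g1 i_g5, hG4, hG5, ← hG1def] at h2
    linear_combination h2
  -- expand G2 using the equation
  have key3 : G2 = -(∫ x in (0:ℝ)..1, ((ψ x : ℝ):ℂ) * (f x * star (u x)))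
      + Complex.I * (lam:ℂ) * ((QW:ℝ):ℂ) - ((E:ℝ):ℂ) * ((W:ℝ):ℂ) := by
    have h2 : G2 = ∫ x in (0:ℝ)..1, (-(((ψ x : ℝ):ℂ) * (f x * star (u x)))
        + (Complex.I * (lam:ℂ)) * (((ψ x : ℝ):ℂ) * (((V x : ℝ):ℂ) * (u x * star (u x))))
        - ((E:ℝ):ℂ) * (((ψ x : ℝ):ℂ) * (u x * star (u x)))) := by
      rw [hG2def]; apply intervalIntegral.integral_congr; intro x _
      simp only [hfdef]; ring
    rw [intervalIntegral.integral_sub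
        (f := fun x => -(((ψ x : ℝ):ℂ) * (f x * star (u x)))
          + (Complex.I * (lam:ℂ)) * (((ψ x : ℝ):ℂ) * (((V x : ℝ):ℂ) * (u x * star (u x)))))
        (g := fun x => ((E:ℝ):ℂ) * (((ψ x : ℝ):ℂ) * (u x * star (u x))))
        (((by fun_prop : Continuous _)).intervalIntegrable 0 1)
        (((by fun_prop : Continuous _)).intervalIntegrable 0 1),
      intervalIntegral.integral_add
        (f := fun x => -(((ψ x : ℝ):ℂ) * (f x * star (u x))))
        (g := fun x => (Complex.I * (lam:ℂ))
          * (((ψ x : ℝ):ℂ) * (((V x : ℝ):ℂ) * (u x * star (u x)))))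
        (((by fun_prop : Continuous _)).intervalIntegrable 0 1)
        (((by fun_prop : Continuous _)).intervalIntegrable 0 1),
      intervalIntegral.integral_neg, intervalIntegral.integral_const_mul,
      intervalIntegral.integral_const_mul, hQWc, hWc] at h2
    linear_combination h2
  -- the pairing : R = N1 + I lam Q - E N
  have hG6 : (∫ x in (0:ℝ)..1, deriv (deriv u) x * star (u x)) = -((N1:ℝ):ℂ) := by
    have h := perInt'
      (g := fun x => deriv u x * star (u x))
      (g' := fun x => deriv (deriv u) x * star (u x) + deriv u x * star (deriv u x))
      (fun x => (hu'd x).mul (hud x).star)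
      ((cu''.mul cu.star).add (cu'.mul cu'.star))
      (by simp [e_u, e_u'])
    rw [intervalIntegral.integral_add i_g6 i_g7, hG7] at h
    linear_combination h
  have hRform : R = ((N1:ℝ):ℂ) + Complex.I * (lam:ℂ) * ((Q:ℝ):ℂ) - ((E:ℝ):ℂ) * ((N:ℝ):ℂ) := by
    have h2 : R = ∫ x in (0:ℝ)..1, (-(deriv (deriv u) x * star (u x))
        + (Complex.I * (lam:ℂ)) * (((V x : ℝ):ℂ) * (u x * star (u x)))
        - ((E:ℝ):ℂ) * (u x * star (u x))) := by
      rw [hRdef]; apply intervalIntegral.integral_congr; intro x _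
      simp only [hfdef, Complex.star_def]; ring
    rw [intervalIntegral.integral_sub
        (f := fun x => -(deriv (deriv u) x * star (u x))
          + (Complex.I * (lam:ℂ)) * (((V x : ℝ):ℂ) * (u x * star (u x))))
        (g := fun x => ((E:ℝ):ℂ) * (u x * star (u x)))
        (((by fun_prop : Continuous _)).intervalIntegrable 0 1)
        (((by fun_prop : Continuous _)).intervalIntegrable 0 1),
      intervalIntegral.integral_add
        (f := fun x => -(deriv (deriv u) x * star (u x)))
        (g := fun x => (Complex.I * (lam:ℂ)) * (((V x : ℝ):ℂ) * (u x * star (u x))))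
        (((by fun_prop : Continuous _)).intervalIntegrable 0 1)
        (((by fun_prop : Continuous _)).intervalIntegrable 0 1),
      intervalIntegral.integral_neg, intervalIntegral.integral_const_mul,
      intervalIntegral.integral_const_mul, hG6, hQc, hNc] at h2
    linear_combination h2
  have him : R.im = lam * Q := by
    rw [hRform]; simp
  -- real parts
  have hTre : (∫ x in (0:ℝ)..1, ((ψ x : ℝ):ℂ) * (f x * star (u x))).re = T := by
    rw [hTdef]
    simpa using (Complex.reCLM.intervalIntegral_comp_comm i_fu).symm
  have key1re : G1.re + G2.re + P = 0 := by
    have h := congrArg Complex.re key1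
    simpa using h
  have key2re : D + 2 * G1.re = 0 := by
    have h := congrArg Complex.re key2
    simp [Complex.star_def] at h
    linarith
  have key3re : G2.re = -T - E * W := by
    have h := congrArg Complex.re key3
    rw [Complex.sub_re, Complex.add_re, Complex.neg_re, hTre] at h
    simp only [Complex.mul_re, Complex.I_re, Complex.I_im, Complex.ofReal_re,
      Complex.ofReal_im] at h
    rw [h]; ring
  have hPDTW : P = D / 2 + T + E * W := by linarith

  -- basic positivity
  have hQ0 : 0 ≤ Q := by
    rw [hQdef]
    exact intervalIntegral.integral_nonneg (by norm_num)
      (fun x _ => mul_nonneg (hVnn x) (sq_nonneg _))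
  have hW0 : 0 ≤ W := by
    rw [hWdef]
    exact intervalIntegral.integral_nonneg (by norm_num)
      (fun x _ => mul_nonneg (hψnn x) (sq_nonneg _))
  have hS0 : 0 ≤ S := by
    rw [hSdef]
    exact intervalIntegral.integral_nonneg (by norm_num) (fun x _ => by positivity)
  -- D ≤ C Q
  have hDle : D ≤ C * Q := by
    have h : D ≤ ∫ x in (0:ℝ)..1, C * (V x * ‖u x‖^2) := by
      rw [hDdef]
      apply intervalIntegral.integral_mono_on (by norm_num)
        ((cψ''.mul ((cu.norm).pow 2)).intervalIntegrable 0 1)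
        ((by fun_prop : Continuous fun x => C * (V x * ‖u x‖^2)).intervalIntegrable 0 1)
      intro x _
      have h1 : deriv (deriv ψ) x ≤ C * V x := (le_abs_self _).trans (hψ'' x)
      exact le_trans (mul_le_mul_of_nonneg_right h1 (sq_nonneg _))
        (le_of_eq (mul_assoc _ _ _))
    rw [intervalIntegral.integral_const_mul, ← hQdef] at h
    exact h
  -- W ≤ C Q
  have hWle : W ≤ C * Q := by
    have h : W ≤ ∫ x in (0:ℝ)..1, C * (V x * ‖u x‖^2) := by
      rw [hWdef]
      apply intervalIntegral.integral_mono_on (by norm_num)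
        ((cψ.mul ((cu.norm).pow 2)).intervalIntegrable 0 1)
        ((by fun_prop : Continuous fun x => C * (V x * ‖u x‖^2)).intervalIntegrable 0 1)
      intro x _
      exact le_trans (mul_le_mul_of_nonneg_right (hψV x) (sq_nonneg _))
        (le_of_eq (mul_assoc _ _ _))
    rw [intervalIntegral.integral_const_mul, ← hQdef] at h
    exact h
  -- T ≤ S/2 + (MC/2) Q
  have hTle : T ≤ (1/2) * S + (M * C / 2) * Q := by
    have h : T ≤ ∫ x in (0:ℝ)..1, ((1/2) * ‖f x‖^2 + (M * C / 2) * (V x * ‖u x‖^2)) := by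
      rw [hTdef]
      apply intervalIntegral.integral_mono_on (by norm_num)
        (((Complex.continuous_re.comp (cΨ.mul (cf.mul cu.star)))).intervalIntegrable 0 1)
        ((by fun_prop :
          Continuous fun x => (1/2) * ‖f x‖^2 + (M * C / 2) * (V x * ‖u x‖^2)).intervalIntegrable 0 1)
      intro x hx
      show (((ψ x : ℝ):ℂ) * (f x * star (u x))).re
        ≤ (1/2) * ‖f x‖^2 + (M * C / 2) * (V x * ‖u x‖^2)
      have h1 : (((ψ x : ℝ):ℂ) * (f x * star (u x))).re ≤ ψ x * (‖f x‖ * ‖u x‖) := by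
        refine le_trans (Complex.re_le_norm _) ?_
        rw [norm_mul, norm_mul, norm_star, Complex.norm_real,
          Real.norm_eq_abs, abs_of_nonneg (hψnn x)]
      have h2 : ψ x * ψ x ≤ M * (C * V x) := mul_le_mul (hMb x hx) (hψV x) (hψnn x) hM0
      nlinarith [sq_nonneg (‖f x‖ - ψ x * ‖u x‖), norm_nonneg (f x), norm_nonneg (u x),
        hψnn x, sq_nonneg ‖u x‖, mul_le_mul_of_nonneg_right h2 (sq_nonneg ‖u x‖)]
    rw [intervalIntegral.integral_add
        (((by fun_prop : Continuous fun x => (1/2) * ‖f x‖^2).intervalIntegrable 0 1))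
        (((by fun_prop :
          Continuous fun x => (M * C / 2) * (V x * ‖u x‖^2)).intervalIntegrable 0 1)),
      intervalIntegral.integral_const_mul, intervalIntegral.integral_const_mul,
      ← hSdef, ← hQdef] at h
    exact h
  -- pairing lower bound
  have hq : lam * Q ≤ ‖R‖ := by
    calc lam * Q = R.im := him.symm
      _ ≤ |R.im| := le_abs_self _
      _ ≤ ‖R‖ := Complex.abs_im_le_norm R
  -- put it together
  set m := max 0 E with hmdef
  have hm0 : 0 ≤ m := le_max_left _ _
  have hEW : E * W ≤ m * (C * Q) := by
    calc E * W ≤ m * W := mul_le_mul_of_nonneg_right (le_max_right 0 E) hW0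
      _ ≤ m * (C * Q) := mul_le_mul_of_nonneg_left hWle hm0
  have hPle : P ≤ A * (1 + m) * Q + (1/2) * S := by
    rw [hAdef]
    nlinarith [hPDTW, hDle, hTle, hEW, hQ0, hm0, hM0, hC,
      mul_nonneg hC.le hQ0, mul_nonneg hM0 (mul_nonneg hC.le hQ0),
      mul_nonneg hm0 (mul_nonneg hM0 (mul_nonneg hC.le hQ0))]
  have hQle : Q ≤ ‖R‖ / lam := (le_div_iff₀ hlam).mpr (by linarith [hq])
  have hPle2 : P ≤ A * (1 + m) * (‖R‖ / lam) + (1/2) * S := by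
    have := mul_le_mul_of_nonneg_left hQle (by positivity : (0:ℝ) ≤ A * (1 + m))
    linarith
  -- convert rpow to sqrt and finish
  have hlr : lam ^ (-(1:ℝ)/2) = (Real.sqrt lam)⁻¹ := by
    rw [neg_div, Real.rpow_neg hlam.le, Real.sqrt_eq_rpow]
  rw [← Real.sqrt_eq_rpow, ← Real.sqrt_eq_rpow, ← Real.sqrt_eq_rpow, ← Real.sqrt_eq_rpow, hlr]
  have hslam : 0 < Real.sqrt lam := Real.sqrt_pos.mpr hlam
  have hn1 : (0:ℝ) ≤ Real.sqrt A := Real.sqrt_nonneg A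
  have b1 : Real.sqrt (A * (1 + m) * (‖R‖ / lam))
      ≤ (Real.sqrt A + 1) * (1 + Real.sqrt m) * (Real.sqrt lam)⁻¹ * Real.sqrt ‖R‖ := by
    have e1 : Real.sqrt (A * (1 + m) * (‖R‖ / lam))
        = Real.sqrt A * Real.sqrt (1 + m) * (Real.sqrt ‖R‖ / Real.sqrt lam) := by
      rw [Real.sqrt_mul (by positivity), Real.sqrt_mul hA.le, Real.sqrt_div (norm_nonneg R)]
    rw [e1]
    have h2 : Real.sqrt A * Real.sqrt (1 + m) ≤ (Real.sqrt A + 1) * (1 + Real.sqrt m) :=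
      mul_le_mul (by linarith) (sqrtOneAdd hm0) (Real.sqrt_nonneg _) (by positivity)
    calc Real.sqrt A * Real.sqrt (1 + m) * (Real.sqrt ‖R‖ / Real.sqrt lam)
        ≤ (Real.sqrt A + 1) * (1 + Real.sqrt m) * (Real.sqrt ‖R‖ / Real.sqrt lam) :=
          mul_le_mul_of_nonneg_right h2 (by positivity)
      _ = (Real.sqrt A + 1) * (1 + Real.sqrt m) * (Real.sqrt lam)⁻¹ * Real.sqrt ‖R‖ := by
          ring
  have b2 : Real.sqrt ((1/2) * S) ≤ (Real.sqrt A + 1) * Real.sqrt S := by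
    calc Real.sqrt ((1/2) * S) ≤ Real.sqrt S := Real.sqrt_le_sqrt (by linarith)
      _ ≤ (Real.sqrt A + 1) * Real.sqrt S :=
          le_mul_of_one_le_left (Real.sqrt_nonneg _) (by linarith)
  calc Real.sqrt P ≤ Real.sqrt (A * (1 + m) * (‖R‖ / lam) + (1/2) * S) :=
        Real.sqrt_le_sqrt hPle2
    _ ≤ Real.sqrt (A * (1 + m) * (‖R‖ / lam)) + Real.sqrt ((1/2) * S) :=
        sqrtAddLe _ _ (by positivity) (by positivity)
    _ ≤ (Real.sqrt A + 1) * (1 + Real.sqrt m) * (Real.sqrt lam)⁻¹ * Real.sqrt ‖R‖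
        + (Real.sqrt A + 1) * Real.sqrt S := add_le_add b1 b2
end
end
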